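/- Let A be a commutative noetherian ring, M a finitely generated A-module, F a finitely generated free A-module, and φ: M → F an A-linear map. Then φ is versal if and only if for every finitely generated A-module P, the map G_φ(P): G_M(P) → G_F(P) is injective. -/

import Mathlib

open Module LinearMap

/-- A linear map `φ : M → F` is *versal* if every linear map from `M` into a finitely
generated free module factors through `φ`. -/
def IsVersal (A : Type) [CommRing A] {M F : Type} [AddCommGroup M] [Module A M]
    [AddCommGroup F] [Module A F] (φ : M →ₗ[A] F) : Prop :=
  ∀ (E : Type) [AddCommGroup E] [Module A E] [Module.Free A E] [Module.Finite A E]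
    (g : M →ₗ[A] E), ∃ h : F →ₗ[A] E, g = h ∘ₗ φ

open Module LinearMap TensorProduct

/-- The natural map `α_{M,P} : M ⊗ P → Hom(M*, P)`, `α(m ⊗ p)(λ) = λ(m) • p`. -/
noncomputable def alphaMap (A : Type) [CommRing A] (M P : Type) [AddCommGroup M]
    [Module A M] [AddCommGroup P] [Module A P] :
    M ⊗[A] P →ₗ[A] (Module.Dual A M →ₗ[A] P) :=
  (dualTensorHom A (Module.Dual A M) P) ∘ₗ
    (TensorProduct.map (Module.Dual.eval A M) LinearMap.id)

/-- `G_M(P)` is the image of `α_{M,P} : M ⊗ P → Hom(M*, P)`. -/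
noncomputable def GFun (A : Type) [CommRing A] (M P : Type) [AddCommGroup M] [Module A M]
    [AddCommGroup P] [Module A P] : Submodule A (Module.Dual A M →ₗ[A] P) :=
  LinearMap.range (alphaMap A M P)

/-!
Versality of `φ` just says that `φ* : F* → M*` is surjective, and then precomposition with `φ*`
is injective on all of `Hom(M*, P)`. Conversely, embed the cokernel of `φ*` into an injective
module `I` and choose a surjection `p : Aⁿ → M`. Since `p*` is injective, the map
`M* → coker φ* → I` extends along `p*` to some `k : (Aⁿ)* → I`, i.e. it is
`λ ↦ ∑ λ(p eᵢ) k(eᵢ*)`.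
This is an element of `G_M(P)` for the finitely generated `P = range k`, and it vanishes on the
image of `φ*`, so by injectivity it is zero, which forces the cokernel to vanish.
-/

universe u

open CategoryTheory in
lemma Module.exists_injective_embedding (R : Type u) [Ring R] (Q : Type u) [AddCommGroup Q]
    [Module R Q] :
    ∃ (I : Type u) (_ : AddCommGroup I) (_ : Module R I) (_ : Module.Injective R I)
      (ι : Q →ₗ[R] I), Function.Injective ι := by
  let J := Injective.under (ModuleCat.of R Q)
  exact ⟨J, _, _, Module.injective_module_of_injective_object R J
      (inj := inferInstanceAs (CategoryTheory.Injective J)),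
    (Injective.ι (ModuleCat.of R Q)).hom, (ModuleCat.mono_iff_injective _).mp inferInstance⟩

section

variable {A : Type} [CommRing A] {M : Type} [AddCommGroup M] [Module A M]

lemma isVersal_iff_surjective_dualMap {F : Type} [AddCommGroup F] [Module A F]
    {φ : M →ₗ[A] F} : IsVersal A φ ↔ Function.Surjective φ.dualMap := by
  refine ⟨fun hv μ ↦ ?_, fun hs E _ _ _ _ g ↦ ?_⟩
  · obtain ⟨h, hh⟩ := hv A μ
    exact ⟨h, hh.symm⟩
  · choose h hh using hs
    let B := Module.Free.chooseBasis A E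
    refine ⟨∑ i, (h (B.coord i ∘ₗ g)).smulRight (B i), ?_⟩
    ext m
    have hφ (μ : Module.Dual A M) (x : M) : h μ (φ x) = μ x := LinearMap.congr_fun (hh μ) x
    simp only [coe_comp, Function.comp_apply, LinearMap.sum_apply, smulRight_apply, hφ]
    exact (B.sum_repr (g m)).symm

lemma lcomp_injective {N P : Type} [AddCommGroup N] [Module A N] [AddCommGroup P] [Module A P]
    {f : M →ₗ[A] N} (hf : Function.Surjective f) : Function.Injective (LinearMap.lcomp A P f) :=
  fun _ _ h ↦ LinearMap.ext <| hf.forall.mpr (LinearMap.congr_fun h)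

lemma comp_dualMap_mem_GFun {P ι : Type} [AddCommGroup P] [Module A P] [Fintype ι]
    [DecidableEq ι] (p : (ι → A) →ₗ[A] M) (k : Module.Dual A (ι → A) →ₗ[A] P) :
    k ∘ₗ p.dualMap ∈ GFun A M P := by
  refine ⟨∑ i, p (Pi.single i 1) ⊗ₜ k (LinearMap.proj i), LinearMap.ext fun μ ↦ ?_⟩
  have hμ : p.dualMap μ =
      ∑ i, μ (p (Pi.single i 1)) • LinearMap.proj (R := A) (φ := fun _ : ι ↦ A) i := by
    ext v
    simp [Pi.single_apply]
  simp [alphaMap, hμ]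

lemma surjective_dualMap_of_injOn_lcomp [Module.Finite A M] {F : Type} [AddCommGroup F]
    [Module A F] {φ : M →ₗ[A] F}
    (H : ∀ (P : Type) [AddCommGroup P] [Module A P] [Module.Finite A P],
      Set.InjOn (LinearMap.lcomp A P φ.dualMap) (GFun A M P)) :
    Function.Surjective φ.dualMap := by
  let q := (range φ.dualMap).mkQ
  obtain ⟨I, _, _, _, ι, hι⟩ :=
    Module.exists_injective_embedding A (Module.Dual A M ⧸ range φ.dualMap)
  obtain ⟨n, p, hp⟩ := Module.Finite.exists_fin' A M
  obtain ⟨k, hk⟩ := Module.Injective.extension_property A I _ _ p.dualMap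
    (p.dualMap_injective_of_surjective hp) (ι ∘ₗ q)
  let j := k.rangeRestrict ∘ₗ p.dualMap
  have hj : (range k).subtype ∘ₗ j = ι ∘ₗ q := hk
  have hjφ : j ∘ₗ φ.dualMap = 0 := by
    rw [← LinearMap.cancel_left (range k).injective_subtype, ← LinearMap.comp_assoc, hj,
      LinearMap.comp_assoc, range_mkQ_comp, LinearMap.comp_zero, LinearMap.comp_zero]
  have hj0 : j = 0 := H (range k) (comp_dualMap_mem_GFun p k.rangeRestrict) (zero_mem _)
    (by rw [map_zero]; exact hjφ)
  have hq : q = 0 := by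
    rw [← LinearMap.cancel_left hι, ← hj, hj0, LinearMap.comp_zero, LinearMap.comp_zero]
  rw [← LinearMap.range_eq_top, ← Submodule.ker_mkQ (range φ.dualMap)]
  exact LinearMap.ker_eq_top.mpr hq

end

theorem stmt16 (A : Type) [CommRing A]
    (M F : Type) [AddCommGroup M] [Module A M] [Module.Finite A M]
    [AddCommGroup F] [Module A F]
    (φ : M →ₗ[A] F) :
    IsVersal A φ ↔
      ∀ (P : Type) [AddCommGroup P] [Module A P] [Module.Finite A P],
        Set.InjOn (LinearMap.lcomp A P φ.dualMap) (GFun A M P) := by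
  rw [isVersal_iff_surjective_dualMap]
  exact ⟨fun hs _ _ _ _ ↦ (lcomp_injective hs).injOn, surjective_dualMap_of_injOn_lcomp⟩
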